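/- arXiv:1408.3887 — 2 statements merged into one kernel-verified Lean document; each statement's English description precedes it below -/
import Mathlib

section
/- Let X be a V-space with uniformly vanishing asymmetry. Then the V-space X̃ of proper Cauchy filters on X, with distance d(F,G) = ⋁_{F₀∈F, G₀∈G} d(F₀,G₀), itself has uniformly vanishing asymmetry. -/
open Filter Set

/-- `a` is well-above `b`: for every `S` with `sInf S ≤ b` some `s ∈ S` satisfies `s ≤ a`. -/
def WellAbove {V : Type*} [CompleteLattice V] (a b : V) : Prop :=
  ∀ S : Set V, sInf S ≤ b → ∃ s ∈ S, s ≤ a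

/-- Flagg's value quantales (bottom element plays the role of `0`). -/
class ValueQuantale (V : Type*) extends CompleteLattice V, Add V where
  add_comm' : ∀ a b : V, a + b = b + a
  add_assoc' : ∀ a b c : V, a + b + c = a + (b + c)
  add_bot' : ∀ a : V, a + ⊥ = a
  sInf_wellAbove : ∀ x : V, x = sInf {y | WellAbove y x}
  add_sInf' : ∀ (x : V) (S : Set V), x + sInf S = sInf ((x + ·) '' S)
  inf_wellAbove_bot : ∀ a b : V, WellAbove a ⊥ → WellAbove b ⊥ → WellAbove (a ⊓ b) ⊥

variable {V : Type*} [ValueQuantale V] {X : Type*}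

/-- n-fold sum `n·δ`. -/
def nmul : ℕ → V → V
  | 0, _ => ⊥
  | n + 1, δ => δ + nmul n δ

/-- The ball `B_ε(x)`. -/
def ball' (d : X → X → V) (ε : V) (x : X) : Set X := {y | d x y ≤ ε}

/-- The op-ball `B^ε(x)`. -/
def opBall (d : X → X → V) (ε : V) (x : X) : Set X := {y | d y x ≤ ε}

/-- `B_ε(S)`. -/
def ballSet (d : X → X → V) (ε : V) (S : Set X) : Set X := ⋃ s ∈ S, ball' d ε s

/-- Cauchy filter on a `V`-space. -/
def IsCauchyF (d : X → X → V) (F : Filter X) : Prop :=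
  ∀ ε : V, WellAbove ε ⊥ → ∃ x : X, ball' d ε x ∈ F

/-- op-Cauchy filter on a `V`-space. -/
def IsOpCauchyF (d : X → X → V) (F : Filter X) : Prop :=
  ∀ ε : V, WellAbove ε ⊥ → ∃ x : X, opBall d ε x ∈ F

/-- Round filter. -/
def IsRound (d : X → X → V) (F : Filter X) : Prop :=
  ∀ F₀ ∈ F, ∃ ε : V, WellAbove ε ⊥ ∧ ∀ x : X, ball' d ε x ∈ F → ball' d ε x ⊆ F₀

/-- Minimal Cauchy filter: Cauchy with no proper Cauchy subfilter.
(A subfilter `G ⊆ F` in the set-of-sets sense corresponds to `G.sets ⊆ F.sets`.) -/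
def IsMinCauchy (d : X → X → V) (F : Filter X) : Prop :=
  IsCauchyF d F ∧ ∀ G : Filter X, IsCauchyF d G → G.sets ⊆ F.sets → G = F

/-- `F_≻`: the filter generated by the sets `B_ε(F₀)`, `F₀ ∈ F`, `ε ≻ 0`. -/
def roundify (d : X → X → V) (F : Filter X) : Filter X :=
  Filter.generate {S | ∃ F₀ ∈ F, ∃ ε : V, WellAbove ε ⊥ ∧ S = ballSet d ε F₀}

/-- Uniformly vanishing asymmetry. -/
def UVA (d : X → X → V) : Prop :=
  ∀ ε : V, WellAbove ε ⊥ → ∃ δ : V, WellAbove δ ⊥ ∧ ∀ x y : X, d y x ≤ δ → d x y ≤ ε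

/-- Distance between subsets: `d(S,T) = ⋀_{s∈S,t∈T} d(s,t)`. -/
def distSet (d : X → X → V) (S T : Set X) : V := ⨅ s ∈ S, ⨅ t ∈ T, d s t

/-- Distance between filters: `d(F,G) = ⋁_{F₀∈F,G₀∈G} d(F₀,G₀)`. -/
def distF (d : X → X → V) (F G : Filter X) : V :=
  ⨆ F₀ ∈ F, ⨆ G₀ ∈ G, distSet d F₀ G₀

/-- `F_x`, the filter generated by the balls `B_ε(x)`, `ε ≻ 0`. -/
def ptFilter (d : X → X → V) (x : X) : Filter X :=
  Filter.generate {S | ∃ ε : V, WellAbove ε ⊥ ∧ S = ball' d ε x}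

/-- `F^x`, the filter generated by the op-balls `B^ε(x)`, `ε ≻ 0`. -/
def opPtFilter (d : X → X → V) (x : X) : Filter X :=
  Filter.generate {S | ∃ ε : V, WellAbove ε ⊥ ∧ S = opBall d ε x}

section Aux

lemma vq_add_sInf_pair (c a b : V) : c + (a ⊓ b) = (c + a) ⊓ (c + b) := by
  have h := ValueQuantale.add_sInf' c {a, b}
  rw [Set.image_pair] at h
  simpa [sInf_pair] using h

lemma vq_add_le_add_left {a b : V} (h : a ≤ b) (c : V) : c + a ≤ c + b := by
  have : c + (a ⊓ b) = (c + a) ⊓ (c + b) := vq_add_sInf_pair c a b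
  rw [inf_eq_left.mpr h] at this
  rw [this]; exact inf_le_right

lemma vq_add_le_add_right {a b : V} (h : a ≤ b) (c : V) : a + c ≤ b + c := by
  rw [ValueQuantale.add_comm' a c, ValueQuantale.add_comm' b c]
  exact vq_add_le_add_left h c

lemma vq_add_le_add {a b c e : V} (h1 : a ≤ b) (h2 : c ≤ e) : a + c ≤ b + e :=
  le_trans (vq_add_le_add_left h2 a) (vq_add_le_add_right h1 e)

lemma vq_add_iInf {ι : Sort*} (c : V) (f : ι → V) : c + ⨅ i, f i = ⨅ i, c + f i := by
  rw [iInf, ValueQuantale.add_sInf' c (Set.range f), ← Set.range_comp, iInf]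
  rfl

lemma vq_iInf_add {ι : Sort*} (c : V) (f : ι → V) : (⨅ i, f i) + c = ⨅ i, f i + c := by
  rw [ValueQuantale.add_comm', vq_add_iInf]
  exact iInf_congr fun i => ValueQuantale.add_comm' c (f i)

/-- Halving: for `ε ≻ ⊥` there is `δ ≻ ⊥` with `δ + δ ≤ ε`. -/
lemma vq_half (ε : V) (hε : WellAbove ε ⊥) : ∃ δ : V, WellAbove δ ⊥ ∧ δ + δ ≤ ε := by
  set A : Set V := {y | WellAbove y ⊥} with hA
  have hInfA : sInf A = ⊥ := (ValueQuantale.sInf_wellAbove ⊥).symm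
  set S : Set V := {s | ∃ a ∈ A, ∃ b ∈ A, s = a + b} with hS
  have hSbot : sInf S ≤ ⊥ := by
    rw [← hInfA]
    refine le_sInf fun a ha => ?_
    have hsub : (a + ·) '' A ⊆ S := by
      rintro _ ⟨b, hb, rfl⟩
      exact ⟨a, ha, b, hb, rfl⟩
    have : sInf S ≤ sInf ((a + ·) '' A) := sInf_le_sInf hsub
    rw [← ValueQuantale.add_sInf', hInfA, ValueQuantale.add_bot'] at this
    exact this
  obtain ⟨s, hsS, hsε⟩ := hε S hSbot
  obtain ⟨a, ha, b, hb, rfl⟩ := hsS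
  refine ⟨a ⊓ b, ValueQuantale.inf_wellAbove_bot a b ha hb, ?_⟩
  exact le_trans (vq_add_le_add inf_le_left inf_le_right) hsε

/-- Thirding: for `ε ≻ ⊥` there is `δ ≻ ⊥` with `δ + δ + δ ≤ ε`. -/
lemma vq_third (ε : V) (hε : WellAbove ε ⊥) : ∃ δ : V, WellAbove δ ⊥ ∧ δ + δ + δ ≤ ε := by
  obtain ⟨a, ha, haa⟩ := vq_half ε hε
  obtain ⟨b, hb, hbb⟩ := vq_half a ha
  refine ⟨a ⊓ b, ValueQuantale.inf_wellAbove_bot a b ha hb, ?_⟩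
  have h1 : (a ⊓ b) + (a ⊓ b) ≤ a := le_trans (vq_add_le_add inf_le_right inf_le_right) hbb
  exact le_trans (vq_add_le_add h1 inf_le_left) haa

lemma vq_distSet_add (d : X → X → V) (S T : Set X) (c : V) :
    distSet d S T + c = ⨅ s ∈ S, ⨅ t ∈ T, (d s t + c) := by
  simp only [distSet, vq_iInf_add]

end Aux

/-- The `V`-space `X̃` of proper Cauchy filters has uniformly vanishing asymmetry. -/
theorem stmt14 (d : X → X → V) (hrefl : ∀ x, d x x = ⊥)
    (htri : ∀ x y z, d x z ≤ d x y + d y z) (hUVA : UVA d) :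
    UVA (fun F G : {F : Filter X // F ≠ ⊥ ∧ IsCauchyF d F} => distF d F.1 G.1) := by
  intro ε hε
  -- ε₂ + ε₂ + ε₂ ≤ ε
  obtain ⟨ε₂, hε₂, hε₂3⟩ := vq_third ε hε
  -- UVA for ε₂
  obtain ⟨δ, hδ, hδflip⟩ := hUVA ε₂ hε₂
  -- δ₃ + δ₃ + δ₃ ≤ δ
  obtain ⟨δ₃, hδ₃, hδ₃3⟩ := vq_third δ hδ
  set μ : V := δ₃ ⊓ ε₂ with hμdef
  have hμ : WellAbove μ ⊥ := ValueQuantale.inf_wellAbove_bot _ _ hδ₃ hε₂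
  -- UVA for μ
  obtain ⟨δμ, hδμ, hμflip⟩ := hUVA μ hμ
  set r : V := δμ ⊓ μ with hrdef
  have hr : WellAbove r ⊥ := ValueQuantale.inf_wellAbove_bot _ _ hδμ hμ
  have hrμ : r ≤ μ := inf_le_right
  have hμδ₃ : μ ≤ δ₃ := inf_le_left
  have hμε₂ : μ ≤ ε₂ := inf_le_right
  refine ⟨δ₃, hδ₃, ?_⟩
  intro F G hGF
  -- hGF : distF d G.1 F.1 ≤ δ₃ ; goal : distF d F.1 G.1 ≤ ε
  obtain ⟨x, hBx⟩ := F.2.2 r hr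
  obtain ⟨y, hCy⟩ := G.2.2 r hr
  haveI : F.1.NeBot := ⟨F.2.1⟩
  haveI : G.1.NeBot := ⟨G.2.1⟩
  show distF d F.1 G.1 ≤ ε
  refine iSup₂_le fun F₀ hF₀ => iSup₂_le fun G₀ hG₀ => ?_
  have hBF : ball' d r x ∩ F₀ ∈ F.1 := Filter.inter_mem hBx hF₀
  have hCG : ball' d r y ∩ G₀ ∈ G.1 := Filter.inter_mem hCy hG₀
  obtain ⟨f₀, hf₀⟩ := Filter.nonempty_of_mem hBF
  obtain ⟨g₀, hg₀⟩ := Filter.nonempty_of_mem hCG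
  -- flips through op-balls with radius r
  have flipr : ∀ z w : X, d z w ≤ r → d w z ≤ μ := fun z w h =>
    hμflip w z (h.trans inf_le_left)
  -- the distance between the filter sets is small
  have hD : distSet d (ball' d r y ∩ G₀) (ball' d r x ∩ F₀) ≤ δ₃ := by
    refine le_trans ?_ hGF
    exact le_iSup₂_of_le _ hCG (le_iSup₂_of_le _ hBF le_rfl)
  -- d y x is small
  have hyx : d y x ≤ δ := by
    have h1 : d y x ≤ distSet d (ball' d r y ∩ G₀) (ball' d r x ∩ F₀) + (r + μ) := by
      rw [vq_distSet_add]
      refine le_iInf₂ fun g hg => le_iInf₂ fun f hf => ?_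
      have t1 : d y x ≤ d y g + (d g f + d f x) :=
        le_trans (htri y g x) (vq_add_le_add_left (htri g f x) _)
      have t2 : d y g + (d g f + d f x) ≤ r + (d g f + μ) :=
        vq_add_le_add hg.1 (vq_add_le_add_left (flipr x f hf.1) _)
      have t3 : r + (d g f + μ) = d g f + (r + μ) := by
        rw [ValueQuantale.add_comm' r, ValueQuantale.add_assoc',
          ValueQuantale.add_comm' μ r]
      exact le_trans t1 (le_trans t2 (le_of_eq t3))
    refine le_trans h1 (le_trans (vq_add_le_add hD (vq_add_le_add (hrμ.trans hμδ₃) hμδ₃))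
      (le_trans (le_of_eq (ValueQuantale.add_assoc' δ₃ δ₃ δ₃).symm) hδ₃3))
  have hxy : d x y ≤ ε₂ := hδflip x y hyx
  -- final estimate
  have hfinal : d f₀ g₀ ≤ ε₂ + (ε₂ + ε₂) := by
    have t1 : d f₀ g₀ ≤ d f₀ x + (d x y + d y g₀) :=
      le_trans (htri f₀ x g₀) (vq_add_le_add_left (htri x y g₀) _)
    have t2 : d f₀ x ≤ ε₂ := (flipr x f₀ hf₀.1).trans hμε₂
    have t3 : d y g₀ ≤ ε₂ := hg₀.1.trans (hrμ.trans hμε₂)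
    exact le_trans t1 (vq_add_le_add t2 (vq_add_le_add hxy t3))
  have hsum : ε₂ + (ε₂ + ε₂) ≤ ε := by
    rw [← ValueQuantale.add_assoc']; exact hε₂3
  refine le_trans ?_ (hfinal.trans hsum)
  exact iInf₂_le_of_le f₀ hf₀.2 (iInf₂_le g₀ hg₀.2)
end

section
/- Let X be a V-space with uniformly vanishing asymmetry. If F₁ and F₂ are minimal Cauchy filters on X with d(F₁,F₂) = d(F₂,F₁) = 0, then F₁ = F₂. Consequently, every equivalence class of proper Cauchy filters under the relation F ∼ G ⟺ d(F,G) = d(G,F) = 0 contains a unique minimal Cauchy filter, namely F_≻, so X̃₀ (the separated quotient of the space of proper Cauchy filters) is isometric to the space X̂ of minimal Cauchy filters. -/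
open Filter Set

variable {V : Type*} [ValueQuantale V] {X : Type*}

/-! ### Auxiliary lemmas -/

section Aux

lemma vq_add_comm (a b : V) : a + b = b + a := ValueQuantale.add_comm' a b

lemma vq_add_assoc (a b c : V) : a + b + c = a + (b + c) := ValueQuantale.add_assoc' a b c

lemma vq_add_bot (a : V) : a + ⊥ = a := ValueQuantale.add_bot' a

lemma vq_add_sInf (x : V) (S : Set V) : x + sInf S = sInf ((x + ·) '' S) :=
  ValueQuantale.add_sInf' x S

lemma vq_add_le_add_s16 {a b a' b' : V} (h : a ≤ b) (h' : a' ≤ b') : a + a' ≤ b + b' :=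
  le_trans (vq_add_le_add_left h' a) (vq_add_le_add_right h b')

lemma vq_le_add_self {a b : V} : a ≤ a + b := by
  calc a = a + ⊥ := (vq_add_bot a).symm
  _ ≤ a + b := vq_add_le_add_left bot_le a

lemma vq_eq_bot_of_forall {a : V} (h : ∀ ε : V, WellAbove ε ⊥ → a ≤ ε) : a = ⊥ :=
  le_bot_iff.mp (by
    rw [ValueQuantale.sInf_wellAbove (⊥ : V)]
    exact le_sInf fun ε hε => h ε hε)

lemma vq_le_of_forall_le_add {a b : V} (h : ∀ ε : V, WellAbove ε ⊥ → a ≤ b + ε) : a ≤ b := by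
  have h1 : a ≤ b + sInf {y : V | WellAbove y ⊥} := by
    rw [vq_add_sInf]
    refine le_sInf ?_
    rintro _ ⟨ε, hε, rfl⟩
    exact h ε hε
  rwa [← ValueQuantale.sInf_wellAbove (⊥ : V), vq_add_bot] at h1

lemma vq_exists_half {ε : V} (hε : WellAbove ε ⊥) : ∃ δ : V, WellAbove δ ⊥ ∧ δ + δ ≤ ε := by
  have hbot : (⊥ : V) = sInf {y : V | WellAbove y ⊥} := ValueQuantale.sInf_wellAbove ⊥
  have key : sInf {v : V | ∃ y, WellAbove y ⊥ ∧ ∃ z, WellAbove z ⊥ ∧ v = y + z} ≤ ⊥ := by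
    refine le_trans (le_sInf fun y hy => ?_) hbot.ge
    have h2 : sInf {v : V | ∃ y, WellAbove y ⊥ ∧ ∃ z, WellAbove z ⊥ ∧ v = y + z}
        ≤ y + sInf {y : V | WellAbove y ⊥} := by
      rw [vq_add_sInf]
      refine le_sInf ?_
      rintro _ ⟨z, hz, rfl⟩
      exact sInf_le ⟨y, hy, z, hz, rfl⟩
    rwa [← hbot, vq_add_bot] at h2
  obtain ⟨v, ⟨y, hy, z, hz, rfl⟩, hvε⟩ := hε _ key
  exact ⟨y ⊓ z, ValueQuantale.inf_wellAbove_bot y z hy hz,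
    le_trans (vq_add_le_add_s16 inf_le_left inf_le_right) hvε⟩

lemma vq_exists_third {ε : V} (hε : WellAbove ε ⊥) :
    ∃ δ : V, WellAbove δ ⊥ ∧ δ + δ + δ ≤ ε := by
  obtain ⟨δ₁, hδ₁, h1⟩ := vq_exists_half hε
  obtain ⟨δ, hδ, h2⟩ := vq_exists_half hδ₁
  have hδδ₁ : δ ≤ δ₁ := le_trans vq_le_add_self h2
  exact ⟨δ, hδ, le_trans (vq_add_le_add_s16 h2 hδδ₁) h1⟩

variable (d : X → X → V)

lemma mem_ballSet {z : X} {ε : V} {S : Set X} :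
    z ∈ ballSet d ε S ↔ ∃ s ∈ S, d s z ≤ ε := by
  simp [ballSet, ball']

lemma distSet_le {S T : Set X} {s t : X} (hs : s ∈ S) (ht : t ∈ T) :
    distSet d S T ≤ d s t :=
  le_trans (iInf₂_le s hs) (iInf₂_le t ht)

lemma distSet_le_distF {F G : Filter X} {F₀ G₀ : Set X} (hF : F₀ ∈ F) (hG : G₀ ∈ G) :
    distSet d F₀ G₀ ≤ distF d F G :=
  le_iSup₂_of_le F₀ hF (le_iSup₂_of_le G₀ hG le_rfl)

lemma distF_le {F G : Filter X} {c : V}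
    (h : ∀ F₀ ∈ F, ∀ G₀ ∈ G, distSet d F₀ G₀ ≤ c) : distF d F G ≤ c :=
  iSup₂_le fun F₀ hF => iSup₂_le fun G₀ hG => h F₀ hF G₀ hG

lemma distF_mono {F F' G G' : Filter X} (hF : F ≤ F') (hG : G ≤ G') :
    distF d F' G' ≤ distF d F G :=
  distF_le d fun F₀ h1 G₀ h2 => distSet_le_distF d (hF h1) (hG h2)

lemma exists_close {S T : Set X} {ε : V} (hε : WellAbove ε ⊥)
    (h : distSet d S T ≤ ⊥) : ∃ s ∈ S, ∃ t ∈ T, d s t ≤ ε := by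
  have h2 : sInf {v : V | ∃ s ∈ S, ∃ t ∈ T, v = d s t} ≤ ⊥ := by
    refine le_trans ?_ h
    exact le_iInf₂ fun s hs => le_iInf₂ fun t ht => sInf_le ⟨s, hs, t, ht, rfl⟩
  obtain ⟨v, ⟨s, hs, t, ht, rfl⟩, hv⟩ := hε _ h2
  exact ⟨s, hs, t, ht, hv⟩

lemma le_roundify (hrefl : ∀ x, d x x = ⊥) (F : Filter X) : F ≤ roundify d F := by
  rw [roundify, Filter.le_generate_iff]
  rintro S ⟨F₀, hF₀, ε, hε, rfl⟩
  exact F.mem_of_superset hF₀ fun s hs =>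
    (mem_ballSet d).mpr ⟨s, hs, by rw [hrefl]; exact bot_le⟩

lemma ballSet_mem_roundify {F : Filter X} {F₀ : Set X} {ε : V}
    (hF₀ : F₀ ∈ F) (hε : WellAbove ε ⊥) : ballSet d ε F₀ ∈ roundify d F :=
  Filter.mem_generate_of_mem ⟨F₀, hF₀, ε, hε, rfl⟩

lemma roundify_cauchy (htri : ∀ x y z, d x z ≤ d x y + d y z) {F : Filter X}
    (hF : IsCauchyF d F) : IsCauchyF d (roundify d F) := by
  intro ε hε
  obtain ⟨δ, hδ, hδ2⟩ := vq_exists_half hε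
  obtain ⟨x, hx⟩ := hF δ hδ
  refine ⟨x, Filter.mem_of_superset (ballSet_mem_roundify d hx hδ) ?_⟩
  intro z hz
  obtain ⟨y, hy, hyz⟩ := (mem_ballSet d).mp hz
  have hy' : d x y ≤ δ := hy
  show d x z ≤ ε
  exact le_trans (htri x y z) (le_trans (vq_add_le_add_s16 hy' hyz) hδ2)

lemma key_le_roundify (htri : ∀ x y z, d x z ≤ d x y + d y z) (hUVA : UVA d)
    {F G : Filter X} (hG : IsCauchyF d G) (hd : distF d G F = ⊥) :
    G ≤ roundify d F := by
  rw [roundify, Filter.le_generate_iff]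
  rintro S ⟨F₀, hF₀, ε, hε, rfl⟩
  obtain ⟨δ, hδ, hδ3⟩ := vq_exists_third hε
  obtain ⟨δ', hδ', hflip⟩ := hUVA δ hδ
  have hη : WellAbove (δ ⊓ δ') ⊥ := ValueQuantale.inf_wellAbove_bot δ δ' hδ hδ'
  obtain ⟨y, hy⟩ := hG _ hη
  have hds : distSet d (ball' d (δ ⊓ δ') y) F₀ ≤ ⊥ :=
    hd ▸ distSet_le_distF d hy hF₀
  obtain ⟨g, hg, f, hf, hgf⟩ := exists_close d hη hds
  refine Filter.mem_of_superset hy fun z hz => (mem_ballSet d).mpr ⟨f, hf, ?_⟩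
  have hg' : d y g ≤ δ ⊓ δ' := hg
  have hz' : d y z ≤ δ ⊓ δ' := hz
  have h1 : d f g ≤ δ := hflip f g (le_trans hgf inf_le_right)
  have h2 : d g y ≤ δ := hflip g y (le_trans hg' inf_le_right)
  have h3 : d y z ≤ δ := le_trans hz' inf_le_left
  calc d f z ≤ d f g + d g z := htri f g z
  _ ≤ d f g + (d g y + d y z) := vq_add_le_add_left (htri g y z) _
  _ ≤ δ + (δ + δ) := vq_add_le_add_s16 h1 (vq_add_le_add_s16 h2 h3)
  _ = δ + δ + δ := (vq_add_assoc δ δ δ).symm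
  _ ≤ ε := hδ3

lemma distF_self_eq_bot (htri : ∀ x y z, d x z ≤ d x y + d y z) (hUVA : UVA d)
    {F : Filter X} (hF : IsCauchyF d F) (hne : F ≠ ⊥) : distF d F F = ⊥ := by
  have : F.NeBot := ⟨hne⟩
  apply vq_eq_bot_of_forall
  intro ε hε
  obtain ⟨δ, hδ, hδ2⟩ := vq_exists_half hε
  obtain ⟨δ', hδ', hflip⟩ := hUVA δ hδ
  have hη : WellAbove (δ ⊓ δ') ⊥ := ValueQuantale.inf_wellAbove_bot δ δ' hδ hδ'
  obtain ⟨x, hx⟩ := hF _ hη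
  refine distF_le d fun F₀ hF₀ G₀ hG₀ => ?_
  obtain ⟨f, hf1, hf2⟩ := Filter.nonempty_of_mem (Filter.inter_mem hF₀ hx)
  obtain ⟨g, hg1, hg2⟩ := Filter.nonempty_of_mem (Filter.inter_mem hG₀ hx)
  have hxf : d x f ≤ δ ⊓ δ' := hf2
  have hxg : d x g ≤ δ ⊓ δ' := hg2
  refine le_trans (distSet_le d hf1 hg1) ?_
  calc d f g ≤ d f x + d x g := htri f x g
  _ ≤ δ + δ := vq_add_le_add_s16 (hflip f x (le_trans hxf inf_le_right))
      (le_trans hxg inf_le_left)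
  _ ≤ ε := hδ2

lemma vq_le_add_distSet {a b : V} {S T : Set X}
    (h : ∀ s ∈ S, ∀ t ∈ T, a ≤ b + d s t) : a ≤ b + distSet d S T := by
  have h1 : a ≤ b + sInf {v : V | ∃ s ∈ S, ∃ t ∈ T, v = d s t} := by
    rw [vq_add_sInf]
    refine le_sInf ?_
    rintro _ ⟨v, ⟨s, hs, t, ht, rfl⟩, rfl⟩
    exact h s hs t ht
  refine le_trans h1 (vq_add_le_add_left ?_ b)
  exact le_iInf₂ fun s hs => le_iInf₂ fun t ht => sInf_le ⟨s, hs, t, ht, rfl⟩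

lemma distF_roundify_ge (htri : ∀ x y z, d x z ≤ d x y + d y z) (hUVA : UVA d)
    (F G : Filter X) : distF d F G ≤ distF d (roundify d F) (roundify d G) := by
  apply vq_le_of_forall_le_add
  intro ε hε
  obtain ⟨δ, hδ, hδ2⟩ := vq_exists_half hε
  obtain ⟨δ', hδ', hflip⟩ := hUVA δ hδ
  have hη : WellAbove (δ ⊓ δ') ⊥ := ValueQuantale.inf_wellAbove_bot δ δ' hδ hδ'
  refine distF_le d fun F₀ hF₀ G₀ hG₀ => ?_
  have hS' : ballSet d (δ ⊓ δ') F₀ ∈ roundify d F := ballSet_mem_roundify d hF₀ hη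
  have hT' : ballSet d (δ ⊓ δ') G₀ ∈ roundify d G := ballSet_mem_roundify d hG₀ hη
  have pointwise : ∀ f' ∈ ballSet d (δ ⊓ δ') F₀, ∀ g' ∈ ballSet d (δ ⊓ δ') G₀,
      distSet d F₀ G₀ ≤ ((δ ⊓ δ') + δ) + d f' g' := by
    intro f' hf' g' hg'
    obtain ⟨f, hf, hff'⟩ := (mem_ballSet d).mp hf'
    obtain ⟨g, hg, hgg'⟩ := (mem_ballSet d).mp hg'
    have hg'g : d g' g ≤ δ := hflip g' g (le_trans hgg' inf_le_right)
    refine le_trans (distSet_le d hf hg) ?_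
    calc d f g ≤ d f f' + d f' g := htri f f' g
    _ ≤ d f f' + (d f' g' + d g' g) := vq_add_le_add_left (htri f' g' g) _
    _ ≤ (δ ⊓ δ') + (d f' g' + δ) := vq_add_le_add_s16 hff' (vq_add_le_add_left hg'g _)
    _ = ((δ ⊓ δ') + δ) + d f' g' := by
        rw [vq_add_comm (d f' g') δ]
        exact (vq_add_assoc (δ ⊓ δ') δ (d f' g')).symm
  have h1 : distSet d F₀ G₀
      ≤ ((δ ⊓ δ') + δ) + distSet d (ballSet d (δ ⊓ δ') F₀) (ballSet d (δ ⊓ δ') G₀) :=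
    vq_le_add_distSet d pointwise
  refine le_trans h1 ?_
  have h2 : distSet d (ballSet d (δ ⊓ δ') F₀) (ballSet d (δ ⊓ δ') G₀)
      ≤ distF d (roundify d F) (roundify d G) := distSet_le_distF d hS' hT'
  calc ((δ ⊓ δ') + δ) + distSet d (ballSet d (δ ⊓ δ') F₀) (ballSet d (δ ⊓ δ') G₀)
      ≤ ((δ ⊓ δ') + δ) + distF d (roundify d F) (roundify d G) :=
        vq_add_le_add_left h2 _
  _ = distF d (roundify d F) (roundify d G) + ((δ ⊓ δ') + δ) := vq_add_comm _ _
  _ ≤ distF d (roundify d F) (roundify d G) + ε :=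
        vq_add_le_add_left (le_trans (vq_add_le_add_right inf_le_left δ) hδ2) _

end Aux

/-- Uniqueness of minimal Cauchy representatives and the isometry `X̃₀ ≅ X̂`,
with the representative of the class of `F` being `F_≻`. -/
theorem stmt16 (d : X → X → V) (hrefl : ∀ x, d x x = ⊥)
    (htri : ∀ x y z, d x z ≤ d x y + d y z) (hUVA : UVA d) :
    (∀ F₁ F₂ : Filter X, IsMinCauchy d F₁ → IsMinCauchy d F₂ →
      distF d F₁ F₂ = ⊥ → distF d F₂ F₁ = ⊥ → F₁ = F₂) ∧
    (∀ F : Filter X, F ≠ ⊥ → IsCauchyF d F →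
      IsMinCauchy d (roundify d F) ∧
      distF d F (roundify d F) = ⊥ ∧ distF d (roundify d F) F = ⊥ ∧
      ∀ G : Filter X, IsMinCauchy d G →
        distF d F G = ⊥ → distF d G F = ⊥ → G = roundify d F) ∧
    (∀ F G : Filter X, F ≠ ⊥ → IsCauchyF d F → G ≠ ⊥ → IsCauchyF d G →
      distF d (roundify d F) (roundify d G) = distF d F G) := by
  refine ⟨?_, ?_, ?_⟩
  · intro F₁ F₂ h₁ h₂ _ hd21
    have hkey : F₂ ≤ roundify d F₁ := key_le_roundify d htri hUVA h₂.1 hd21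
    have hr : roundify d F₁ = F₂ :=
      h₂.2 (roundify d F₁) (roundify_cauchy d htri h₁.1) hkey
    have hle : F₁ ≤ F₂ := hr ▸ le_roundify d hrefl F₁
    exact (h₁.2 F₂ h₂.1 hle).symm
  · intro F hne hF
    have hRC : IsCauchyF d (roundify d F) := roundify_cauchy d htri hF
    have hself : distF d F F = ⊥ := distF_self_eq_bot d htri hUVA hF hne
    have hle : F ≤ roundify d F := le_roundify d hrefl F
    refine ⟨⟨hRC, ?_⟩, ?_, ?_, ?_⟩
    · intro G hGC hGsub
      have hRG : roundify d F ≤ G := hGsub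
      have hFG : F ≤ G := hle.trans hRG
      have hdGF : distF d G F = ⊥ :=
        le_bot_iff.mp (le_trans (distF_mono d hFG le_rfl) hself.le)
      exact le_antisymm (key_le_roundify d htri hUVA hGC hdGF) hRG
    · exact le_bot_iff.mp (le_trans (distF_mono d le_rfl hle) hself.le)
    · exact le_bot_iff.mp (le_trans (distF_mono d hle le_rfl) hself.le)
    · intro G hGmin _ hdGF
      have hkey : G ≤ roundify d F := key_le_roundify d htri hUVA hGmin.1 hdGF
      exact (hGmin.2 _ hRC hkey).symm
  · intro F G _ _ _ _
    exact le_antisymm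
      (distF_mono d (le_roundify d hrefl F) (le_roundify d hrefl G))
      (distF_roundify_ge d htri hUVA F G)
end
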